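/- For every δ with 0 < δ < 1/2 and every φ ≤ δ, the entropy density with cutoff satisfies the quadratic lower bound Φ_δ(φ) ≥ (δ − φ)² / (2 δ² (1−δ)²). -/

import Mathlib

/-!
Reversing both orientations, `Φ_δ(φ) = ∫_φ^{1/2} ∫_s^{1/2} dr ds / M_δ(r)` for `φ ≤ 1/2`. The
integrand is nonnegative and equals `1 / M(δ)` on `(-∞, δ]`, so restricting the integration to the
triangle `φ ≤ s ≤ r ≤ δ` leaves `(δ - φ)² / (2 M(δ))`.
-/

/-- The degenerate mobility `M(φ) = φ²(1-φ)²`. -/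
noncomputable def M (φ : ℝ) : ℝ := φ ^ 2 * (1 - φ) ^ 2

/-- The truncated (nondegenerate) mobility `M_δ`. -/
noncomputable def Md (δ φ : ℝ) : ℝ :=
  if φ ≤ δ then M δ else if φ ≤ 1 - δ then M φ else M (1 - δ)

/-- The entropy density with cutoff `Φ_δ(φ) = ∫_{1/2}^{φ} ∫_{1/2}^{s} dr ds / M_δ(r)`. -/
noncomputable def Phid (δ φ : ℝ) : ℝ :=
  ∫ s in (1 / 2 : ℝ)..φ, ∫ r in (1 / 2 : ℝ)..s, 1 / Md δ r

open MeasureTheory Set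

namespace intervalIntegral

variable {g : ℝ → ℝ} {a b c k s : ℝ}

theorem integral_const_mul_sub_left (a b k : ℝ) :
    ∫ s in a..b, k * (b - s) = k * (b - a) ^ 2 / 2 := by
  simp only [integral_const_mul, integral_comp_sub_left (fun x => x), sub_self, integral_id]
  ring

theorem mul_sub_le_integral_of_eq_const_on (hg : ∀ a b, IntervalIntegrable g volume a b)
    (hg0 : ∀ r ∈ Icc b c, 0 ≤ g r) (hk : ∀ r ∈ Icc a b, g r = k) (hs : s ∈ Icc a b)
    (hbc : b ≤ c) : k * (b - s) ≤ ∫ r in s..c, g r := by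
  have hsb : ∫ r in s..b, g r = k * (b - s) := by
    rw [integral_congr (g := fun _ => k) fun r hr => hk r ?_]
    · simp only [integral_const, smul_eq_mul, mul_comm]
    · rw [uIcc_of_le hs.2] at hr
      exact ⟨hs.1.trans hr.1, hr.2⟩
  rw [← integral_add_adjacent_intervals (hg s b) (hg b c), hsb]
  exact le_add_of_nonneg_right (integral_nonneg hbc hg0)

theorem mul_sq_div_two_le_iterated_integral (hg : ∀ a b, IntervalIntegrable g volume a b)
    (hg0 : ∀ r ∈ Icc a c, 0 ≤ g r) (hk : ∀ r ∈ Icc a b, g r = k) (hab : a ≤ b) (hbc : b ≤ c) :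
    k * (b - a) ^ 2 / 2 ≤ ∫ s in c..a, ∫ r in c..s, g r := by
  set F : ℝ → ℝ := fun s => ∫ r in s..c, g r
  have hF : Continuous F := by
    have : F = -fun s => ∫ r in c..s, g r := funext fun s => integral_symm c s
    exact this ▸ (continuous_primitive hg c).neg
  have hF0 : 0 ≤ ∫ s in b..c, F s := integral_nonneg hbc fun s hs =>
    integral_nonneg hs.2 fun r hr => hg0 r ⟨hab.trans (hs.1.trans hr.1), hr.2⟩
  have hlin : IntervalIntegrable (fun s => k * (b - s)) volume a b :=
    (continuous_const.mul (continuous_const.sub continuous_id)).intervalIntegrable _ _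
  calc k * (b - a) ^ 2 / 2 = ∫ s in a..b, k * (b - s) := (integral_const_mul_sub_left a b k).symm
    _ ≤ ∫ s in a..b, F s := integral_mono_on hab hlin (hF.intervalIntegrable _ _)
        fun s hs => mul_sub_le_integral_of_eq_const_on hg
          (fun r hr => hg0 r ⟨hs.1.trans (hs.2.trans hr.1), hr.2⟩) hk hs hbc
    _ ≤ ∫ s in a..c, F s := by
        rw [← integral_add_adjacent_intervals (hF.intervalIntegrable a b)
          (hF.intervalIntegrable b c)]
        linarith
    _ = ∫ s in c..a, ∫ r in c..s, g r := by
        rw [integral_symm c a, ← integral_neg]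
        exact integral_congr fun s _ => by simp only [F, integral_symm s c]

end intervalIntegral

theorem Md_eq_M_max_min {δ : ℝ} (hδ : δ ≤ 1 / 2) (r : ℝ) :
    Md δ r = M (max δ (min r (1 - δ))) := by
  unfold Md
  split_ifs with h₁ h₂
  · rw [min_eq_left (by linarith), max_eq_left h₁]
  · rw [min_eq_left h₂, max_eq_right (by linarith)]
  · rw [min_eq_right (by linarith), max_eq_right (by linarith)]

theorem continuous_Md {δ : ℝ} (hδ : δ ≤ 1 / 2) : Continuous (Md δ) := by
  rw [funext (Md_eq_M_max_min hδ)]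
  unfold M
  fun_prop

theorem Md_pos {δ : ℝ} (hδ0 : 0 < δ) (hδ : δ ≤ 1 / 2) (r : ℝ) : 0 < Md δ r := by
  rw [Md_eq_M_max_min hδ]
  have h₀ : 0 < max δ (min r (1 - δ)) := lt_max_of_lt_left hδ0
  have h₁ : 0 < 1 - max δ (min r (1 - δ)) :=
    sub_pos.2 (max_lt (by linarith) ((min_le_right _ _).trans_lt (by linarith)))
  unfold M
  positivity

/-- Quadratic lower bound for `Φ_δ` below `δ`. -/
theorem entropy_cutoff_quadratic_bound_left (δ : ℝ) (hδ0 : 0 < δ) (hδ : δ < 1 / 2)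
    (φ : ℝ) (hφ : φ ≤ δ) :
    Phid δ φ ≥ (δ - φ) ^ 2 / (2 * δ ^ 2 * (1 - δ) ^ 2) := by
  have hpos := Md_pos hδ0 hδ.le
  have hg : Continuous fun r => 1 / Md δ r :=
    continuous_const.div (continuous_Md hδ.le) fun r => (hpos r).ne'
  have key := intervalIntegral.mul_sq_div_two_le_iterated_integral (c := 1 / 2) (k := 1 / M δ)
    (fun a b => hg.intervalIntegrable a b) (fun r _ => (one_div_pos.2 (hpos r)).le)
    (fun r hr => by rw [Md, if_pos hr.2]) hφ (by linarith)
  calc (δ - φ) ^ 2 / (2 * δ ^ 2 * (1 - δ) ^ 2) = 1 / M δ * (δ - φ) ^ 2 / 2 := by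
        rw [div_mul_eq_mul_div, one_mul, div_div, M]; ring
    _ ≤ Phid δ φ := key
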